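/- Let |ρ⟩ be a pure state and {A_i} a finite collection of positive semi-definite operators forming a measurement (Σ_i A_i² ≤ I suffices, or POVM square roots). Define ρ' := Σ_i A_i |ρ⟩⟨ρ| A_i. Then F²(|ρ⟩⟨ρ|, ρ') = Σ_i (Tr(A_i |ρ⟩⟨ρ|))², and moreover Σ_i (Tr(A_i ρ))² ≥ Σ_i (Tr(A_i² ρ))². -/

import Mathlib

open Matrix Kronecker Complex ComplexOrder

noncomputable section

namespace QIT

open scoped Classical

variable {n : Type*} [Fintype n] [DecidableEq n]

/-- Square root of a positive semidefinite matrix (junk value `0` otherwise). -/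
def msqrt (A : Matrix n n ℂ) : Matrix n n ℂ :=
  if h : A.PosSemidef then
    (h.1.eigenvectorUnitary : Matrix n n ℂ) *
      Matrix.diagonal ((↑) ∘ Real.sqrt ∘ h.1.eigenvalues) *
      (star h.1.eigenvectorUnitary : Matrix n n ℂ)
  else 0

/-- Fidelity `F(ρ,σ) = Tr √(√σ ρ √σ)`. -/
def fid (ρ σ : Matrix n n ℂ) : ℝ :=
  ((msqrt (msqrt σ * ρ * msqrt σ)).trace).re

/-- Purified distance `P(ρ,σ) = √(1 - F(ρ,σ)²)`. -/
def Pdist (ρ σ : Matrix n n ℂ) : ℝ := Real.sqrt (1 - fid ρ σ ^ 2)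

/-- A density operator: positive semidefinite with unit trace. -/
def IsDensity (ρ : Matrix n n ℂ) : Prop := ρ.PosSemidef ∧ ρ.trace = 1

/-- A test (POVM element): `0 ≤ Λ ≤ I`. -/
def IsTest (Λ : Matrix n n ℂ) : Prop := Λ.PosSemidef ∧ (1 - Λ).PosSemidef

/-- Smooth hypothesis testing divergence `D_H^ε(ρ‖σ)` (log base 2). -/
def DH (ε : ℝ) (ρ σ : Matrix n n ℂ) : ℝ :=
  sSup {x : ℝ | ∃ Λ : Matrix n n ℂ, IsTest Λ ∧ (Λ * ρ).trace.re ≥ 1 - ε ∧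
    x = Real.logb 2 (1 / (Λ * σ).trace.re)}

/-- Max-relative entropy `D_max(ρ‖σ)`. -/
def Dmax (ρ σ : Matrix n n ℂ) : ℝ :=
  sInf {l : ℝ | ((((2:ℝ) ^ l : ℝ) : ℂ) • σ - ρ).PosSemidef}

/-- Matrix logarithm (base 2) via the spectral decomposition. -/
def mlog (A : Matrix n n ℂ) : Matrix n n ℂ :=
  if h : A.IsHermitian then
    (h.eigenvectorUnitary : Matrix n n ℂ) *
      Matrix.diagonal (fun i => (Real.logb 2 (h.eigenvalues i) : ℂ)) *
      (h.eigenvectorUnitary : Matrix n n ℂ)ᴴ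
  else 0

/-- Quantum relative entropy `D(ρ‖σ) = Tr ρ (log ρ - log σ)` (log base 2). -/
def Drel (ρ σ : Matrix n n ℂ) : ℝ :=
  ((ρ * mlog ρ).trace - (ρ * mlog σ).trace).re

/-- Square root of the Moore–Penrose inverse, on the support. -/
def pinvSqrt (A : Matrix n n ℂ) : Matrix n n ℂ :=
  if h : A.IsHermitian then
    (h.eigenvectorUnitary : Matrix n n ℂ) *
      Matrix.diagonal (fun i =>
        ((if h.eigenvalues i = 0 then 0 else (Real.sqrt (h.eigenvalues i))⁻¹ : ℝ) : ℂ)) *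
      (h.eigenvectorUnitary : Matrix n n ℂ)ᴴ
  else 0

variable {m : Type*} [Fintype m] [DecidableEq m]

/-- Partial trace over the second tensor factor. -/
def ptraceSnd (ρ : Matrix (n × m) (n × m) ℂ) : Matrix n n ℂ :=
  Matrix.of fun i j => ∑ k, ρ (i, k) (j, k)

/-- Partial trace over the first tensor factor. -/
def ptraceFst (ρ : Matrix (n × m) (n × m) ℂ) : Matrix m m ℂ :=
  Matrix.of fun i j => ∑ k, ρ (k, i) (k, j)

/-! For a pure state `ρ = |v⟩⟨v|` and `σ ≥ 0`, the matrix `√σ ρ √σ = |√σ v⟩⟨√σ v|` has rank one,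
and the square root of `|w⟩⟨w|` is `|w⟩⟨w| / ‖w‖`, so `F(ρ, σ)² = ‖√σ v‖² = ⟨v|σ|v⟩`.
For `σ = ∑ᵢ Aᵢ ρ Aᵢ` the term `i` contributes `⟨v|Aᵢ|v⟩² = Tr(Aᵢ ρ)²`.
For the inequality, `Aᵢ² ≤ ∑ⱼ Aⱼ² ≤ 1` puts the spectrum of `Aᵢ` in `[0, 1]`, hence `Aᵢ² ≤ Aᵢ`
and `0 ≤ Tr(Aᵢ² ρ) ≤ Tr(Aᵢ ρ)`. -/

open scoped MatrixOrder

lemma mul_self_le_self_of_mul_self_le_one {A : Type*} [Ring A] [StarRing A] [PartialOrder A]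
    [StarOrderedRing A] [Algebra ℝ A] [TopologicalSpace A]
    [ContinuousFunctionalCalculus ℝ A IsSelfAdjoint] [NonnegSpectrumClass ℝ A]
    {a : A} (ha : 0 ≤ a) (h : a * a ≤ 1) : a * a ≤ a := by
  rw [← cfc_id' ℝ a, ← cfc_mul .., cfc_le_iff ..]
  rw [← cfc_id' ℝ a, ← cfc_mul .., cfc_le_one_iff ..] at h
  intro x hx
  have hx0 : 0 ≤ x := spectrum_nonneg_of_nonneg ha hx
  have hx1 : x * x ≤ 1 := h x hx
  nlinarith

lemma msqrt_eq_sqrt {A : Matrix n n ℂ} (hA : A.PosSemidef) : msqrt A = CFC.sqrt A := by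
  rw [msqrt, dif_pos hA, CFC.sqrt_eq_cfc, cfc_nnreal_eq_real _ A hA.nonneg, hA.1.cfc_eq]
  simp only [IsHermitian.cfc, Unitary.conjStarAlgAut_apply, Real.coe_sqrt, Real.coe_toNNReal']
  congr 3
  funext i
  simp [max_eq_left (hA.eigenvalues_nonneg i)]

omit [DecidableEq n] in
lemma star_dotProduct_self_eq_re (w : n → ℂ) : star w ⬝ᵥ w = ((star w ⬝ᵥ w).re : ℂ) :=
  Complex.eq_re_of_ofReal_le (r := 0) (by simp [dotProduct_star_self_nonneg w])

lemma sqrt_vecMulVec_self_star (w : n → ℂ) :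
    CFC.sqrt (vecMulVec w (star w)) =
      ((Real.sqrt (star w ⬝ᵥ w).re)⁻¹ : ℂ) • vecMulVec w (star w) := by
  by_cases hw : w = 0
  · subst hw
    simp
  set t := (star w ⬝ᵥ w).re with ht_def
  have ht : star w ⬝ᵥ w = t := star_dotProduct_self_eq_re w
  have ht_pos : 0 < t := by
    rw [ht_def, ← Complex.zero_lt_real, ← ht]
    exact (dotProduct_star_self_nonneg w).lt_of_ne' (dotProduct_star_self_eq_zero.not.mpr hw)
  refine CFC.sqrt_unique ?_ ((posSemidef_vecMulVec_self_star w).smul ?_).nonneg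
  · rw [smul_mul_smul_comm, vecMulVec_mul_vecMulVec, vecMulVec_smul, smul_smul, ht]
    convert one_smul ℂ (vecMulVec w (star w))
    have hsqrt_pos : 0 < Real.sqrt t := Real.sqrt_pos.mpr ht_pos
    field_simp
    norm_cast
    exact (Real.sq_sqrt ht_pos.le).symm
  · exact_mod_cast inv_nonneg.mpr (Real.sqrt_nonneg t)

lemma trace_sqrt_vecMulVec_self_star (w : n → ℂ) :
    (CFC.sqrt (vecMulVec w (star w))).trace = Real.sqrt (star w ⬝ᵥ w).re := by
  rw [sqrt_vecMulVec_self_star, trace_smul, trace_vecMulVec, dotProduct_comm w (star w)]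
  nth_rewrite 2 [star_dotProduct_self_eq_re w]
  rw [smul_eq_mul, ← Complex.ofReal_inv, ← Complex.ofReal_mul, inv_mul_eq_div, Real.div_sqrt]

lemma fid_vecMulVec_self_star (v : n → ℂ) {σ : Matrix n n ℂ} (hσ : σ.PosSemidef) :
    fid (vecMulVec v (star v)) σ = Real.sqrt (star v ⬝ᵥ (σ *ᵥ v)).re := by
  set s := CFC.sqrt σ
  have hs : s.IsHermitian := (CFC.sqrt_nonneg σ).posSemidef.1
  have hsand : s * vecMulVec v (star v) * s = vecMulVec (s *ᵥ v) (star (s *ᵥ v)) := by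
    rw [mul_vecMulVec, vecMulVec_mul, star_mulVec, hs.eq]
  have hnorm : star (s *ᵥ v) ⬝ᵥ (s *ᵥ v) = star v ⬝ᵥ (σ *ᵥ v) := by
    rw [star_mulVec, hs.eq, ← dotProduct_mulVec, mulVec_mulVec,
      CFC.sqrt_mul_sqrt_self σ hσ.nonneg]
  rw [fid, msqrt_eq_sqrt hσ, hsand, msqrt_eq_sqrt (posSemidef_vecMulVec_self_star _),
    trace_sqrt_vecMulVec_self_star, hnorm, Complex.ofReal_re]

omit [DecidableEq n] in
lemma dotProduct_mul_vecMulVec_mul_mulVec (A : Matrix n n ℂ) (v : n → ℂ) :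
    star v ⬝ᵥ ((A * vecMulVec v (star v) * A) *ᵥ v) = (star v ⬝ᵥ (A *ᵥ v)) ^ 2 := by
  rw [← mulVec_mulVec, ← mulVec_mulVec, vecMulVec_mulVec]
  simp only [op_smul_eq_smul, mulVec_smul, dotProduct_smul, smul_eq_mul, sq]

omit [DecidableEq n] in
lemma trace_mul_vecMulVec_self_star (A : Matrix n n ℂ) (v : n → ℂ) :
    (A * vecMulVec v (star v)).trace = star v ⬝ᵥ (A *ᵥ v) := by
  rw [mul_vecMulVec, trace_vecMulVec, dotProduct_comm]

omit [DecidableEq n] in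
lemma re_dotProduct_mul_vecMulVec_mul_mulVec {A : Matrix n n ℂ} (hA : A.IsHermitian)
    (v : n → ℂ) :
    (star v ⬝ᵥ ((A * vecMulVec v (star v) * A) *ᵥ v)).re =
      (A * vecMulVec v (star v)).trace.re ^ 2 := by
  have him : (star v ⬝ᵥ (A *ᵥ v)).im = 0 := hA.im_star_dotProduct_mulVec_self v
  rw [dotProduct_mul_vecMulVec_mul_mulVec, trace_mul_vecMulVec_self_star, sq, sq,
    Complex.mul_re, him, mul_zero, sub_zero]

omit [DecidableEq n] in
lemma re_trace_mul_vecMulVec_mono {B C : Matrix n n ℂ} (h : B ≤ C) (v : n → ℂ) :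
    (B * vecMulVec v (star v)).trace.re ≤ (C * vecMulVec v (star v)).trace.re := by
  have hquad := (Matrix.le_iff.mp h).re_dotProduct_nonneg v
  rw [sub_mulVec, dotProduct_sub, map_sub, sub_nonneg] at hquad
  rw [trace_mul_vecMulVec_self_star, trace_mul_vecMulVec_self_star]
  exact hquad

theorem statement2_general {n ι : Type*} [Fintype n] [DecidableEq n] [Fintype ι]
    (v : n → ℂ)
    (A : ι → Matrix n n ℂ) (hA : ∀ i, (A i).PosSemidef)
    (hsum : ((1 : Matrix n n ℂ) - ∑ i, A i * A i).PosSemidef) :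
    fid (vecMulVec v (star v)) (∑ i, A i * vecMulVec v (star v) * A i) ^ 2
        = ∑ i, ((A i * vecMulVec v (star v)).trace.re) ^ 2 ∧
      ∑ i, ((A i * vecMulVec v (star v)).trace.re) ^ 2
        ≥ ∑ i, ((A i * A i * vecMulVec v (star v)).trace.re) ^ 2 := by
  have hσ : (∑ i, A i * vecMulVec v (star v) * A i).PosSemidef := posSemidef_sum _ fun i _ => by
    simpa [(hA i).1.eq] using (posSemidef_vecMulVec_self_star v).conjTranspose_mul_mul_same (A i)
  have hsq_nonneg : ∀ i, 0 ≤ A i * A i := fun i => (hA i).1.isSelfAdjoint.mul_self_nonneg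
  have hsq_le : ∀ i, A i * A i ≤ A i := fun i =>
    mul_self_le_self_of_mul_self_le_one (hA i).nonneg
      ((Finset.single_le_sum (fun j _ => hsq_nonneg j) (Finset.mem_univ i)).trans hsum)
  constructor
  · rw [fid_vecMulVec_self_star v hσ, Real.sq_sqrt (by exact hσ.re_dotProduct_nonneg v),
      sum_mulVec, dotProduct_sum, Complex.re_sum]
    exact Finset.sum_congr rfl fun i _ => re_dotProduct_mul_vecMulVec_mul_mulVec (hA i).1 v
  · refine Finset.sum_le_sum fun i _ =>
      pow_le_pow_left₀ ?_ (re_trace_mul_vecMulVec_mono (hsq_le i) v) 2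
    rw [trace_mul_vecMulVec_self_star]
    exact (hsq_nonneg i).posSemidef.re_dotProduct_nonneg v

/-- fidelity after a gentle POVM-square-root measurement on a pure state. -/
theorem statement2 {n ι : Type*} [Fintype n] [DecidableEq n] [Fintype ι]
    (v : n → ℂ) (hv : star v ⬝ᵥ v = 1)
    (A : ι → Matrix n n ℂ) (hA : ∀ i, (A i).PosSemidef)
    (hsum : ((1 : Matrix n n ℂ) - ∑ i, A i * A i).PosSemidef) :
    fid (vecMulVec v (star v)) (∑ i, A i * vecMulVec v (star v) * A i) ^ 2
        = ∑ i, ((A i * vecMulVec v (star v)).trace.re) ^ 2 ∧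
      ∑ i, ((A i * vecMulVec v (star v)).trace.re) ^ 2
        ≥ ∑ i, ((A i * A i * vecMulVec v (star v)).trace.re) ^ 2 :=
  statement2_general v A hA hsum

end QIT
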